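/- arXiv:1412.4615 — 2 statements merged into one kernel-verified Lean document; each statement's English description precedes it below -/
import Mathlib

section
/- (Lemma 2.2.) Let Φ be a branching mechanism with drift parameter α ∈ ℝ, and for λ ≥ 0 let u_t(λ) denote the unique locally bounded nonnegative solution of u_t = λt − ∫₀ᵗ Φ(u_s) ds. Then for every t ≥ 0 the map λ ↦ u_t(λ) has right derivative at λ = 0 equal to ∫₀ᵗ e^{−αs} ds = (1 − e^{−αt})/α; that is, lim_{λ→0+} u_t(λ)/λ = (1 − e^{−αt})/α, where (1 − e^{−αt})/α is interpreted as t when α = 0. -/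
open MeasureTheory Filter Set

/-- The branching mechanism `Φ(λ) = αλ + βλ² + ∫_{(0,∞)} (e^{-λθ} - 1 + λθ) π(dθ)`. -/
noncomputable def Phi (α β : ℝ) (π : Measure ℝ) (lam : ℝ) : ℝ :=
  α * lam + β * lam ^ 2 + ∫ θ, (Real.exp (-lam * θ) - 1 + lam * θ) ∂π

/-- `u` is a locally bounded nonnegative solution of `u_t = λt - ∫₀ᵗ Φ(u_s) ds`. -/
def IsMassSolution (Φ : ℝ → ℝ) (lam : ℝ) (u : ℝ → ℝ) : Prop :=
  (∀ t, 0 ≤ t → 0 ≤ u t) ∧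
  (∀ T, 0 < T → BddAbove (u '' Set.Icc 0 T)) ∧
  (∀ t, 0 ≤ t → u t = lam * t - ∫ s in (0:ℝ)..t, Φ (u s))

/-!
Write `Φ(x) = αx + R(x)`. For `x ≥ 0` one has `0 ≤ R(x) ≤ x ρ(x)` with
`ρ(x) = βx + ∫ min(θ, xθ²) π(dθ)` (`excessRate`), which is nondecreasing and tends to `0` as
`x → 0+` by dominated convergence. Grönwall's inequality for `u' = λ - Φ(u) ≤ λ + |α| u` gives
`u_s(λ) ≤ λG` on `[0, t]` with `G` independent of `λ`; comparing `u` with the solution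
`λ ∫₀ˢ e^{-αr} dr` of `v' = λ - αv` then gives `|u_t(λ)/λ - ∫₀ᵗ e^{-αs} ds| ≤ G² ρ(λG) → 0`.

A solution of the integral equation is only assumed locally bounded, so its regularity has to be
recovered: up to the supremum `τ` of the times `t` at which `Φ ∘ u` is integrable on `[0, t]` it
is a primitive, hence continuous, and beyond `τ` the integral is `0` and `u_t = λt`. Hence
`Φ ∘ u` is measurable and bounded, so locally integrable, and `u` is continuous and
right-differentiable.
-/

open Topology

lemma exp_neg_mul_sub_one_add_mul_nonneg (x θ : ℝ) : 0 ≤ Real.exp (-x * θ) - 1 + x * θ := by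
  linarith [Real.add_one_le_exp (-x * θ)]

lemma exp_neg_sub_one_add_le_min {y : ℝ} (hy : 0 ≤ y) :
    Real.exp (-y) - 1 + y ≤ min y (y ^ 2) := by
  have hexp : Real.exp (-y) ≤ 1 := Real.exp_le_one_iff.mpr (by linarith)
  refine le_min (by linarith) ?_
  rcases le_or_gt y 1 with hy1 | hy1
  · have h := Real.abs_exp_sub_one_sub_id_le (x := -y) (by rwa [abs_neg, abs_of_nonneg hy])
    nlinarith [(abs_le.mp h).2]
  · nlinarith

lemma exp_neg_mul_sub_one_add_mul_le {x θ : ℝ} (hx : 0 ≤ x) (hθ : 0 ≤ θ) :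
    Real.exp (-x * θ) - 1 + x * θ ≤ x * min θ (x * θ ^ 2) := by
  rw [neg_mul, mul_min_of_nonneg _ _ hx]
  have h := exp_neg_sub_one_add_le_min (mul_nonneg hx hθ)
  rwa [show (x * θ) ^ 2 = x * (x * θ ^ 2) by ring] at h

lemma min_mul_sq_le_max_mul_min {x θ : ℝ} (hx : 0 ≤ x) (hθ : 0 ≤ θ) :
    min θ (x * θ ^ 2) ≤ max 1 x * min θ (θ ^ 2) := by
  rw [mul_min_of_nonneg _ _ (hx.trans (le_max_right 1 x))]
  exact min_le_min (le_mul_of_one_le_left hθ (le_max_left 1 x))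
    (mul_le_mul_of_nonneg_right (le_max_right 1 x) (sq_nonneg θ))

lemma continuousOn_Ici_of_forall_continuousOn_Icc {E : Type*} [TopologicalSpace E] {f : ℝ → E}
    {a : ℝ} (h : ∀ b, a < b → ContinuousOn f (Icc a b)) : ContinuousOn f (Ici a) := by
  intro x hx
  have hmem : Icc a (x + 1) ∈ 𝓝[Ici a] x :=
    mem_nhdsWithin.2 ⟨Iio (x + 1), isOpen_Iio, by simp, fun y hy => ⟨hy.2, hy.1.le⟩⟩
  exact (h (x + 1) (by linarith [mem_Ici.1 hx]) x ⟨hx, by linarith⟩).mono_of_mem_nhdsWithin hmem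

lemma aestronglyMeasurable_restrict_Ioc_of_continuousOn {E : Type*} [TopologicalSpace E]
    [TopologicalSpace.PseudoMetrizableSpace E] {f : ℝ → E} {a τ b : ℝ}
    (h₁ : ContinuousOn f (Ico a τ)) (h₂ : ContinuousOn f (Ioc τ b)) :
    AEStronglyMeasurable f (volume.restrict (Ioc a b)) := by
  have hsub : Ioc a b ⊆ Ico a τ ∪ Icc τ b := fun x hx => by
    rcases lt_or_ge x τ with h | h
    · exact Or.inl ⟨hx.1.le, h⟩
    · exact Or.inr ⟨h, hx.2⟩
  refine AEStronglyMeasurable.mono_set hsub (aestronglyMeasurable_union_iff.2 ⟨?_, ?_⟩)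
  · exact h₁.aestronglyMeasurable measurableSet_Ico
  · rw [← Measure.restrict_congr_set Ioc_ae_eq_Icc]
    exact h₂.aestronglyMeasurable measurableSet_Ioc

lemma gronwallBound_zero_eq_mul (K ε x : ℝ) :
    gronwallBound 0 K ε x = ε * gronwallBound 0 K 1 x := by
  unfold gronwallBound
  split_ifs <;> ring

lemma mul_integral_exp_neg_mul (a t : ℝ) :
    a * ∫ s in (0 : ℝ)..t, Real.exp (-a * s) = 1 - Real.exp (-a * t) := by
  have hderiv : ∀ x ∈ uIcc 0 t,
      HasDerivAt (fun s => Real.exp (-a * s)) (-a * Real.exp (-a * x)) x := fun x _ => by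
    simpa [mul_comm] using ((hasDerivAt_id x).const_mul (-a)).exp
  have h := intervalIntegral.integral_eq_sub_of_hasDerivAt hderiv
    ((by fun_prop : Continuous fun s => -a * Real.exp (-a * s)).intervalIntegrable 0 t)
  rw [intervalIntegral.integral_const_mul] at h
  simp only [mul_zero, Real.exp_zero] at h
  linarith

lemma gronwallBound_zero_nonneg {K ε x : ℝ} (hK : 0 ≤ K) (hε : 0 ≤ ε) (hx : 0 ≤ x) :
    0 ≤ gronwallBound 0 K ε x := by
  simpa [gronwallBound_x0] using gronwallBound_mono le_rfl hε hK hx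

noncomputable def excessRate (β : ℝ) (π : Measure ℝ) (x : ℝ) : ℝ :=
  β * x + ∫ θ, min θ (x * θ ^ 2) ∂π

section LevyMeasure

variable {α β : ℝ} {π : Measure ℝ}

lemma integrable_min_mul_sq (hπ : ∀ᵐ θ ∂π, 0 ≤ θ)
    (hint : Integrable (fun θ => min θ (θ ^ 2)) π) {x : ℝ} (hx : 0 ≤ x) :
    Integrable (fun θ => min θ (x * θ ^ 2)) π := by
  refine (hint.const_mul (max 1 x)).mono' (by fun_prop) ?_
  filter_upwards [hπ] with θ hθ
  rw [Real.norm_eq_abs, abs_of_nonneg (le_min hθ (by positivity))]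
  exact min_mul_sq_le_max_mul_min hx hθ

lemma integrable_exp_neg_mul_sub_one_add_mul (hπ : ∀ᵐ θ ∂π, 0 ≤ θ)
    (hint : Integrable (fun θ => min θ (θ ^ 2)) π) {x : ℝ} (hx : 0 ≤ x) :
    Integrable (fun θ => Real.exp (-x * θ) - 1 + x * θ) π := by
  refine ((integrable_min_mul_sq hπ hint hx).const_mul x).mono' (by fun_prop) ?_
  filter_upwards [hπ] with θ hθ
  rw [Real.norm_eq_abs, abs_of_nonneg (exp_neg_mul_sub_one_add_mul_nonneg x θ)]
  exact exp_neg_mul_sub_one_add_mul_le hx hθ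

lemma mul_le_Phi (hβ : 0 ≤ β) (x : ℝ) : α * x ≤ Phi α β π x := by
  have hR : 0 ≤ ∫ θ, (Real.exp (-x * θ) - 1 + x * θ) ∂π :=
    integral_nonneg fun θ => exp_neg_mul_sub_one_add_mul_nonneg x θ
  unfold Phi
  nlinarith [sq_nonneg x]

lemma Phi_sub_mul_le (hπ : ∀ᵐ θ ∂π, 0 ≤ θ) (hint : Integrable (fun θ => min θ (θ ^ 2)) π)
    {x : ℝ} (hx : 0 ≤ x) : Phi α β π x - α * x ≤ x * excessRate β π x := by
  have h : ∫ θ, (Real.exp (-x * θ) - 1 + x * θ) ∂π ≤ x * ∫ θ, min θ (x * θ ^ 2) ∂π := by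
    rw [← integral_const_mul]
    refine integral_mono_ae (integrable_exp_neg_mul_sub_one_add_mul hπ hint hx)
      ((integrable_min_mul_sq hπ hint hx).const_mul x) ?_
    filter_upwards [hπ] with θ hθ
    exact exp_neg_mul_sub_one_add_mul_le hx hθ
  unfold Phi excessRate
  nlinarith

lemma excessRate_nonneg (hβ : 0 ≤ β) (hπ : ∀ᵐ θ ∂π, 0 ≤ θ) {x : ℝ} (hx : 0 ≤ x) :
    0 ≤ excessRate β π x := by
  refine add_nonneg (mul_nonneg hβ hx) (integral_nonneg_of_ae ?_)
  filter_upwards [hπ] with θ hθ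
  exact le_min hθ (by positivity)

lemma monotoneOn_excessRate (hβ : 0 ≤ β) (hπ : ∀ᵐ θ ∂π, 0 ≤ θ)
    (hint : Integrable (fun θ => min θ (θ ^ 2)) π) : MonotoneOn (excessRate β π) (Ici 0) := by
  intro x hx y hy hxy
  refine add_le_add (mul_le_mul_of_nonneg_left hxy hβ) (integral_mono_ae
    (integrable_min_mul_sq hπ hint hx) (integrable_min_mul_sq hπ hint hy) ?_)
  filter_upwards with θ
  exact min_le_min le_rfl (mul_le_mul_of_nonneg_right hxy (sq_nonneg θ))

lemma tendsto_excessRate_nhdsGE_zero (hπ : ∀ᵐ θ ∂π, 0 ≤ θ)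
    (hint : Integrable (fun θ => min θ (θ ^ 2)) π) :
    Tendsto (excessRate β π) (𝓝[≥] 0) (𝓝 0) := by
  have hlin : Tendsto (fun x : ℝ => β * x) (𝓝[≥] 0) (𝓝 0) := by
    simpa using ((continuous_const_mul β).tendsto 0).mono_left nhdsWithin_le_nhds
  have hsmall : ∀ᶠ x in 𝓝[≥] (0 : ℝ), x ∈ Icc 0 1 := Icc_mem_nhdsGE one_pos
  have hint0 : Tendsto (fun x => ∫ θ, min θ (x * θ ^ 2) ∂π) (𝓝[≥] 0) (𝓝 (∫ _, (0 : ℝ) ∂π)) := by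
    refine tendsto_integral_filter_of_dominated_convergence _ (.of_forall fun x => by fun_prop)
      ?_ hint ?_
    · filter_upwards [hsmall] with x hx
      filter_upwards [hπ] with θ hθ
      rw [Real.norm_eq_abs, abs_of_nonneg (le_min hθ (by nlinarith [hx.1, sq_nonneg θ]))]
      exact min_le_min le_rfl (by nlinarith [hx.2, sq_nonneg θ])
    · filter_upwards [hπ] with θ hθ
      have h : Tendsto (fun x : ℝ => min θ (x * θ ^ 2)) (𝓝 0) (𝓝 (min θ (0 * θ ^ 2))) :=
        (by fun_prop : Continuous fun x : ℝ => min θ (x * θ ^ 2)).tendsto 0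
      simpa [min_eq_right hθ] using h.mono_left nhdsWithin_le_nhds
  have h := hlin.add hint0
  rw [integral_zero, add_zero] at h
  exact h

lemma continuousOn_Phi (hπ : ∀ᵐ θ ∂π, 0 ≤ θ) (hint : Integrable (fun θ => min θ (θ ^ 2)) π) :
    ContinuousOn (Phi α β π) (Ici 0) := by
  refine continuousOn_Ici_of_forall_continuousOn_Icc fun M hM => ?_
  have hR : ContinuousOn (fun x => ∫ θ, (Real.exp (-x * θ) - 1 + x * θ) ∂π) (Icc 0 M) := by
    refine continuousOn_of_dominated (fun x _ => by fun_prop) (fun x hx => ?_)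
      ((integrable_min_mul_sq hπ hint hM.le).const_mul M) (.of_forall fun θ => by fun_prop)
    filter_upwards [hπ] with θ hθ
    rw [Real.norm_eq_abs, abs_of_nonneg (exp_neg_mul_sub_one_add_mul_nonneg x θ)]
    refine (exp_neg_mul_sub_one_add_mul_le hx.1 hθ).trans (mul_le_mul hx.2 ?_ ?_ hM.le)
    · exact min_le_min le_rfl (mul_le_mul_of_nonneg_right hx.2 (sq_nonneg θ))
    · exact le_min hθ (by nlinarith [hx.1, sq_nonneg θ])
  exact (by fun_prop : Continuous fun x : ℝ => α * x + β * x ^ 2).continuousOn.add hR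

end LevyMeasure

namespace IsMassSolution

variable {Φ : ℝ → ℝ} {lam α : ℝ} {w : ℝ → ℝ}

lemma apply_zero (hw : IsMassSolution Φ lam w) : w 0 = 0 := by
  simpa using hw.2.2 0 le_rfl

lemma continuousOn_Icc_of_intervalIntegrable (hw : IsMassSolution Φ lam w) {T : ℝ}
    (hT : 0 ≤ T) (hf : IntervalIntegrable (fun s => Φ (w s)) volume 0 T) :
    ContinuousOn w (Icc 0 T) := by
  have hprim := intervalIntegral.continuousOn_primitive_interval' hf left_mem_uIcc
  rw [uIcc_of_le hT] at hprim
  exact ((continuous_const_mul lam).continuousOn.sub hprim).congr fun t ht => hw.2.2 t ht.1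

lemma eq_mul_of_not_intervalIntegrable (hw : IsMassSolution Φ lam w) {t : ℝ} (ht : 0 ≤ t)
    (hf : ¬ IntervalIntegrable (fun s => Φ (w s)) volume 0 t) : w t = lam * t := by
  rw [hw.2.2 t ht, intervalIntegral.integral_undef hf, sub_zero]

lemma intervalIntegrable (hΦ : ContinuousOn Φ (Ici 0)) (hw : IsMassSolution Φ lam w) {T : ℝ}
    (hT : 0 < T) : IntervalIntegrable (fun s => Φ (w s)) volume 0 T := by
  set f : ℝ → ℝ := fun s => Φ (w s)
  set S : Set ℝ := {t ∈ Icc 0 T | IntervalIntegrable f volume 0 t}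
  have h0S : (0 : ℝ) ∈ S := ⟨⟨le_rfl, hT.le⟩, .refl⟩
  have hSbdd : BddAbove S := ⟨T, fun t ht => ht.1.2⟩
  set τ := sSup S
  have hτ0 : 0 ≤ τ := le_csSup hSbdd h0S
  have hcont_below : ContinuousOn w (Ico 0 τ) := fun t ht => by
    obtain ⟨s, hsS, hts⟩ := exists_lt_of_lt_csSup ⟨0, h0S⟩ ht.2
    have hmem : Icc 0 s ∈ 𝓝[Ico 0 τ] t :=
      mem_nhdsWithin.2 ⟨Iio s, isOpen_Iio, hts, fun x hx => ⟨hx.2.1, hx.1.le⟩⟩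
    exact (hw.continuousOn_Icc_of_intervalIntegrable hsS.1.1 hsS.2 t ⟨ht.1, hts.le⟩)
      |>.mono_of_mem_nhdsWithin hmem
  have hlin_above : ∀ t ∈ Ioc τ T, w t = lam * t := fun t ht =>
    hw.eq_mul_of_not_intervalIntegrable (hτ0.trans ht.1.le) fun hf =>
      (le_csSup hSbdd ⟨⟨hτ0.trans ht.1.le, ht.2⟩, hf⟩).not_gt ht.1
  have hf_below : ContinuousOn f (Ico 0 τ) := hΦ.comp hcont_below fun s hs => hw.1 s hs.1
  have hf_above : ContinuousOn f (Ioc τ T) := by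
    refine (hΦ.comp (continuous_const_mul lam).continuousOn fun t ht => ?_).congr
      fun t ht => by simp only [f, Function.comp_apply, hlin_above t ht]
    rw [mem_Ici, ← hlin_above t ht]
    exact hw.1 t (hτ0.trans ht.1.le)
  obtain ⟨M, hM⟩ := hw.2.1 T hT
  obtain ⟨C, hC⟩ := isCompact_Icc.exists_bound_of_continuousOn
    (hΦ.mono (Icc_subset_Ici_self : Icc 0 M ⊆ Ici 0))
  rw [intervalIntegrable_iff_integrableOn_Ioc_of_le hT.le]
  refine Integrable.of_bound
    (aestronglyMeasurable_restrict_Ioc_of_continuousOn hf_below hf_above) C ?_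
  rw [ae_restrict_iff' measurableSet_Ioc]
  exact .of_forall fun s hs =>
    hC _ ⟨hw.1 s hs.1.le, hM ⟨s, Ioc_subset_Icc_self hs, rfl⟩⟩

lemma continuousOn (hΦ : ContinuousOn Φ (Ici 0)) (hw : IsMassSolution Φ lam w) :
    ContinuousOn w (Ici 0) :=
  continuousOn_Ici_of_forall_continuousOn_Icc fun _ hT =>
    hw.continuousOn_Icc_of_intervalIntegrable hT.le (hw.intervalIntegrable hΦ hT)

lemma hasDerivWithinAt (hΦ : ContinuousOn Φ (Ici 0)) (hw : IsMassSolution Φ lam w) {t : ℝ}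
    (ht : 0 ≤ t) : HasDerivWithinAt w (lam - Φ (w t)) (Ici t) t := by
  have hf : ContinuousOn (fun s => Φ (w s)) (Ici 0) :=
    hΦ.comp (hw.continuousOn hΦ) fun s hs => hw.1 s hs
  have hsub : Ioi t ⊆ Ici 0 := fun s hs => ht.trans (le_of_lt hs)
  have hint : IntervalIntegrable (fun s => Φ (w s)) volume 0 t := by
    rcases ht.eq_or_lt with rfl | ht'
    · exact .refl
    · exact hw.intervalIntegrable hΦ ht'
  have hprim := intervalIntegral.integral_hasDerivWithinAt_right (s := Ici t) (t := Ioi t) hint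
    ((hf.stronglyMeasurableAtFilter_nhdsWithin measurableSet_Ici t).filter_mono
      (nhdsWithin_mono t hsub)) ((hf t ht).mono hsub)
  have hlin : HasDerivWithinAt (fun s => lam * s) lam (Ici t) t := by
    simpa using ((hasDerivAt_id t).const_mul lam).hasDerivWithinAt
  exact (hlin.sub hprim).congr
    (fun s hs => by simpa using hw.2.2 s (ht.trans hs)) (by simpa using hw.2.2 t ht)

lemma le_gronwallBound (hΦ : ContinuousOn Φ (Ici 0)) (hΦα : ∀ x, 0 ≤ x → α * x ≤ Φ x)
    (hw : IsMassSolution Φ lam w) {t : ℝ} (ht : 0 ≤ t) : w t ≤ gronwallBound 0 |α| lam t := by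
  have h := le_gronwallBound_of_liminf_deriv_right_le (K := |α|) (ε := lam)
    ((hw.continuousOn hΦ).mono Icc_subset_Ici_self)
    (fun s hs r hr => (hw.hasDerivWithinAt hΦ hs.1).liminf_right_slope_le hr) hw.apply_zero.le
    (fun s hs => ?_) t ⟨ht, le_rfl⟩
  · simpa using h
  · have hws := hw.1 s hs.1
    nlinarith [hΦα _ hws, neg_abs_le α]

lemma abs_sub_mul_integral_exp_le {ε : ℝ} (hΦ : ContinuousOn Φ (Ici 0))
    (hw : IsMassSolution Φ lam w) {t : ℝ} (ht : 0 ≤ t)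
    (hΦα : ∀ s ∈ Ico 0 t, |Φ (w s) - α * w s| ≤ ε) :
    |w t - lam * ∫ s in (0 : ℝ)..t, Real.exp (-α * s)| ≤ gronwallBound 0 |α| ε t := by
  set v : ℝ → ℝ := fun x => lam * ∫ s in (0 : ℝ)..x, Real.exp (-α * s)
  have hv : ∀ x, HasDerivAt v (lam - α * v x) x := fun x => by
    have h := ((by fun_prop : Continuous fun s => Real.exp (-α * s)).integral_hasStrictDerivAt
      0 x).hasDerivAt.const_mul lam
    refine h.congr_deriv ?_
    simp only [v]
    linear_combination lam * mul_integral_exp_neg_mul α x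
  have hvc : Continuous v := continuous_iff_continuousAt.2 fun x => (hv x).continuousAt
  have h := norm_le_gronwallBound_of_norm_deriv_right_le (f := fun x => w x - v x)
    (δ := 0) (K := |α|) (ε := ε)
    (((hw.continuousOn hΦ).mono Icc_subset_Ici_self).sub hvc.continuousOn)
    (fun s hs => (hw.hasDerivWithinAt hΦ hs.1).sub (hv s).hasDerivWithinAt)
    (by simp [hw.apply_zero, v]) (fun s hs => ?_) t ⟨ht, le_rfl⟩
  · simpa [v] using h
  · rw [Real.norm_eq_abs, Real.norm_eq_abs]
    calc |lam - Φ (w s) - (lam - α * v s)| = |-α * (w s - v s) - (Φ (w s) - α * w s)| := by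
          ring_nf
      _ ≤ |-α * (w s - v s)| + |Φ (w s) - α * w s| := abs_sub _ _
      _ ≤ |α| * |w s - v s| + ε := by
          rw [abs_mul, abs_neg]
          linarith [hΦα s hs]

end IsMassSolution

lemma IsMassSolution.abs_div_sub_integral_exp_le {α β lam t : ℝ} {π : Measure ℝ} {w : ℝ → ℝ}
    (hβ : 0 ≤ β) (hπ : ∀ᵐ θ ∂π, 0 ≤ θ) (hint : Integrable (fun θ => min θ (θ ^ 2)) π)
    (hlam : 0 < lam) (hw : IsMassSolution (Phi α β π) lam w) (ht : 0 ≤ t) :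
    |w t / lam - ∫ s in (0 : ℝ)..t, Real.exp (-α * s)| ≤
      gronwallBound 0 |α| 1 t ^ 2 * excessRate β π (lam * gronwallBound 0 |α| 1 t) := by
  set G := gronwallBound 0 |α| 1 t
  have hΦ : ContinuousOn (Phi α β π) (Ici 0) := continuousOn_Phi hπ hint
  have hlamG : 0 ≤ lam * G :=
    mul_nonneg hlam.le (gronwallBound_zero_nonneg (abs_nonneg α) zero_le_one ht)
  have hwG : ∀ s ∈ Icc 0 t, w s ≤ lam * G := fun s hs => by
    refine (hw.le_gronwallBound hΦ (fun x _ => mul_le_Phi hβ x) hs.1).trans ?_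
    rw [gronwallBound_zero_eq_mul]
    exact mul_le_mul_of_nonneg_left
      (gronwallBound_mono le_rfl zero_le_one (abs_nonneg α) hs.2) hlam.le
  have hexcess : ∀ s ∈ Ico 0 t,
      |Phi α β π (w s) - α * w s| ≤ lam * G * excessRate β π (lam * G) := fun s hs => by
    have hws := hw.1 s hs.1
    have hwsG := hwG s (Ico_subset_Icc_self hs)
    rw [abs_of_nonneg (sub_nonneg.2 (mul_le_Phi hβ _))]
    exact (Phi_sub_mul_le hπ hint hws).trans (mul_le_mul hwsG
      (monotoneOn_excessRate hβ hπ hint hws hlamG hwsG) (excessRate_nonneg hβ hπ hws) hlamG)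
  have h := hw.abs_sub_mul_integral_exp_le hΦ ht hexcess
  rw [gronwallBound_zero_eq_mul] at h
  rw [div_sub' hlam.ne', abs_div, abs_of_pos hlam, div_le_iff₀ hlam]
  calc |w t - lam * ∫ s in (0 : ℝ)..t, Real.exp (-α * s)|
      ≤ lam * G * excessRate β π (lam * G) * G := h
    _ = G ^ 2 * excessRate β π (lam * G) * lam := by ring

theorem mass_ode_right_derivative_at_zero_general
    (α β : ℝ) (hβ : 0 ≤ β) (π : Measure ℝ)
    (hsupp : π (Set.Iic 0) = 0)
    (hint : Integrable (fun θ => min θ (θ ^ 2)) π)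
    (u : ℝ → ℝ → ℝ)
    (hu : ∀ lam : ℝ, 0 ≤ lam → IsMassSolution (Phi α β π) lam (u lam)) :
    ∀ t : ℝ, 0 ≤ t →
      Tendsto (fun lam => u lam t / lam) (nhdsWithin 0 (Set.Ioi 0))
        (nhds (∫ s in (0:ℝ)..t, Real.exp (-α * s))) := by
  intro t ht
  have hπ : ∀ᵐ θ ∂π, 0 ≤ θ :=
    ae_iff.2 (measure_mono_null (fun θ (hθ : ¬ 0 ≤ θ) => (not_le.1 hθ).le) hsupp)
  set G := gronwallBound 0 |α| 1 t
  have hG : 0 ≤ G := gronwallBound_zero_nonneg (abs_nonneg α) zero_le_one ht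
  have hscale : Tendsto (fun lam => lam * G) (𝓝[>] 0) (𝓝[≥] 0) := by
    refine tendsto_nhdsWithin_iff.2 ⟨?_, eventually_nhdsWithin_of_forall fun lam hlam =>
      mul_nonneg (le_of_lt hlam) hG⟩
    simpa using ((continuous_mul_const G).tendsto 0).mono_left nhdsWithin_le_nhds
  have hbound : Tendsto (fun lam => G ^ 2 * excessRate β π (lam * G)) (𝓝[>] 0) (𝓝 0) := by
    simpa using ((tendsto_excessRate_nhdsGE_zero hπ hint).comp hscale).const_mul (G ^ 2)
  refine tendsto_iff_norm_sub_tendsto_zero.2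
    (squeeze_zero' (.of_forall fun _ => norm_nonneg _) ?_ hbound)
  filter_upwards [self_mem_nhdsWithin] with lam hlam
  exact (hu lam (le_of_lt hlam)).abs_div_sub_integral_exp_le hβ hπ hint hlam ht

/-- Lemma 2.2: the right derivative of `λ ↦ u_t(λ)` at `λ = 0` equals
`∫₀ᵗ e^{-αs} ds = (1 - e^{-αt})/α` (interpreted as `t` when `α = 0`). -/
theorem mass_ode_right_derivative_at_zero
    (α β : ℝ) (hβ : 0 ≤ β) (π : Measure ℝ)
    (hsupp : π (Set.Iic 0) = 0) (hσ : SigmaFinite π)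
    (hint : Integrable (fun θ => min θ (θ ^ 2)) π)
    (u : ℝ → ℝ → ℝ)
    (hu : ∀ lam : ℝ, 0 ≤ lam → IsMassSolution (Phi α β π) lam (u lam)) :
    ∀ t : ℝ, 0 ≤ t →
      Tendsto (fun lam => u lam t / lam) (nhdsWithin 0 (Set.Ioi 0))
        (nhds (∫ s in (0:ℝ)..t, Real.exp (-α * s))) :=
  mass_ode_right_derivative_at_zero_general α β hβ π hsupp hint u hu
end

section
/- (Theorem 3.8, stated via the explicit distribution function.) Let Φ be a (sub)critical branching mechanism (α ≥ 0) with Lévy measure π ≠ 0, and fix x > 0. Define F : (0,∞) → ℝ by F(r) = exp(−x · (Φ^{(r,∞)})^{−1}(π((r,∞)))). Then F is nondecreasing, right-continuous, takes values in (0,1], and the Lebesgue–Stieltjes measure μ_F associated with F on (0,∞) and the measure π are mutually absolutely continuous: for every Borel set A ⊆ (0,∞), μ_F(A) = 0 if and only if π(A) = 0. -/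
open MeasureTheory Filter Set

/-- The `(r,∞)`-truncated branching mechanism
`Φ^{(r,∞)}(λ) = Φ(λ) + ∫_{(r,∞)} (1 - e^{-λθ}) π(dθ)`. -/
noncomputable def PhiIoi (α β : ℝ) (π : Measure ℝ) (r lam : ℝ) : ℝ :=
  Phi α β π lam + ∫ θ in Set.Ioi r, (1 - Real.exp (-lam * θ)) ∂π

/-!
Write `λ_r` for `inv r`. Since `∫_{(r,∞)} (1 - e^{-λθ}) π(dθ) = π(r,∞) - ∫_{(r,∞)} e^{-λθ} π(dθ)`,
`λ_r` is the nonnegative root of `λ ↦ Φ(λ) - ∫_{(r,∞)} e^{-λθ} π(dθ)`. This function is strictly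
increasing in `λ`, nondecreasing in `r`, right-continuous in `r`, and continuous in `r` wherever
`π` has no atom; hence `λ_r` is nonincreasing and right-continuous, and continuous at the non-atoms
of `π`. Subtracting the equations at `r ≤ s` gives
`∫_{(r,s]} e^{-λ_r θ} π(dθ) = Φ(λ_r) - Φ(λ_s) + ∫_{(s,∞)} (e^{-λ_s θ} - e^{-λ_r θ}) π(dθ)`.
On `[a, b] ⊂ (0,∞)` the left side is comparable with `π(r,s]`, the right side is at most a constant
times `λ_r - λ_s`, and it is at least a positive constant times `λ_r - λ_s` as soon as `π(b,∞) > 0`.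
Since `F(s) - F(r)` is also comparable with `λ_r - λ_s`, the two measures are mutually absolutely
continuous on such intervals. If `c` is the least point with `π(c,∞) = 0`, then `F = 1` on `[c,∞)`,
and `F` jumps at `c` only if `π` has an atom there.
-/

open Topology
open scoped ENNReal

lemma StieltjesFunction.measure_le_of_forall_sub_le (f g : StieltjesFunction ℝ)
    (h : ∀ r s, r ≤ s → f s - f r ≤ g s - g r) : f.measure ≤ g.measure := by
  let d : StieltjesFunction ℝ :=
    { toFun := fun t => g t - f t
      mono' := fun r s hrs => by linarith [h r s hrs]
      right_continuous' := fun t => (g.right_continuous t).sub (f.right_continuous t) }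
  have hg : g = f + d := StieltjesFunction.ext fun t => by simp [d]
  rw [hg, StieltjesFunction.measure_add]
  exact Measure.le_add_right le_rfl

lemma exists_stieltjesFunction_measure_eq (ρ : Measure ℝ) [IsFiniteMeasure ρ] :
    ∃ f : StieltjesFunction ℝ, f.measure = ρ := by
  have hcont : ∀ t, ContinuousWithinAt (fun b => ∫ _ in Ioi b, (1 : ℝ) ∂ρ) (Ici t) t :=
    fun t => (integrable_const 1).integrableOn.continuousWithinAt_Ici_primitive_Ioi
  simp only [setIntegral_const, smul_eq_mul, mul_one] at hcont
  let f : StieltjesFunction ℝ :=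
    { toFun := fun t => -ρ.real (Ioi t)
      mono' := fun r s hrs => neg_le_neg (measureReal_mono (Ioi_subset_Ioi hrs))
      right_continuous' := fun t => (hcont t).neg }
  refine ⟨f, Measure.ext_of_Ioc _ _ fun a b hab => ?_⟩
  have hsplit : ρ.real (Ioi a) = ρ.real (Ioc a b) + ρ.real (Ioi b) := by
    rw [← Ioc_union_Ioi_eq_Ioi hab.le, measureReal_union Ioc_disjoint_Ioi_same measurableSet_Ioi]
  rw [StieltjesFunction.measure_Ioc, ← ofReal_measureReal]
  change ENNReal.ofReal (-ρ.real (Ioi b) - -ρ.real (Ioi a)) = _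
  congr 1
  linarith

lemma Measure.restrict_Ioc_le_of_forall_le {μ ν : Measure ℝ} {a b : ℝ} (hμ : μ (Ioc a b) ≠ ∞)
    (hν : ν (Ioc a b) ≠ ∞)
    (h : ∀ r s, a ≤ r → r ≤ s → s ≤ b → μ (Ioc r s) ≤ ν (Ioc r s)) :
    μ.restrict (Ioc a b) ≤ ν.restrict (Ioc a b) := by
  have : IsFiniteMeasure (μ.restrict (Ioc a b)) := isFiniteMeasure_restrict.mpr hμ
  have : IsFiniteMeasure (ν.restrict (Ioc a b)) := isFiniteMeasure_restrict.mpr hν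
  obtain ⟨f, hf⟩ := exists_stieltjesFunction_measure_eq (μ.restrict (Ioc a b))
  obtain ⟨g, hg⟩ := exists_stieltjesFunction_measure_eq (ν.restrict (Ioc a b))
  rw [← hf, ← hg]
  refine StieltjesFunction.measure_le_of_forall_sub_le f g fun r s hrs => ?_
  have hIoc : ∀ ρ : Measure ℝ, ρ.restrict (Ioc a b) (Ioc r s) = ρ (Ioc (max r a) (min s b)) :=
    fun ρ => by rw [Measure.restrict_apply measurableSet_Ioc, Ioc_inter_Ioc]
  have hle : f.measure (Ioc r s) ≤ g.measure (Ioc r s) := by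
    rw [hf, hg, hIoc, hIoc]
    rcases le_or_gt (max r a) (min s b) with h' | h'
    · exact h _ _ (le_max_right r a) h' (min_le_right s b)
    · simp [Ioc_eq_empty_of_le h'.le]
  rw [StieltjesFunction.measure_Ioc, StieltjesFunction.measure_Ioc,
    ENNReal.ofReal_le_ofReal_iff (sub_nonneg.mpr (g.mono hrs))] at hle
  exact hle

lemma Measure.restrict_Ioc_absolutelyContinuous_of_le_mul {μ ν : Measure ℝ} {a b : ℝ} {C : ℝ≥0∞}
    (hC : C ≠ ∞) (hμ : μ (Ioc a b) ≠ ∞) (hν : ν (Ioc a b) ≠ ∞)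
    (h : ∀ r s, a ≤ r → r ≤ s → s ≤ b → μ (Ioc r s) ≤ C * ν (Ioc r s)) :
    μ.restrict (Ioc a b) ≪ ν.restrict (Ioc a b) := by
  have hle := Measure.restrict_Ioc_le_of_forall_le (ν := C • ν) hμ
    (by simpa using ENNReal.mul_ne_top hC hν) (by simpa using h)
  rw [Measure.restrict_smul] at hle
  exact (Measure.absolutelyContinuous_of_le hle).trans
    (Measure.AbsolutelyContinuous.rfl.smul_left C)

lemma Measure.AbsolutelyContinuous.restrict_of_subset_iUnion {α ι : Type*} [MeasurableSpace α]
    [Countable ι] {μ ν : Measure α} {s : Set α} {t : ι → Set α} (ht : ∀ i, MeasurableSet (t i))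
    (hst : s ⊆ ⋃ i, t i) (h : ∀ i, μ.restrict (t i) ≪ ν.restrict (t i)) :
    μ.restrict s ≪ ν.restrict s := by
  refine Measure.AbsolutelyContinuous.mk fun A hA hνA => ?_
  rw [Measure.restrict_apply hA] at hνA ⊢
  have hcover : A ∩ s ⊆ ⋃ i, A ∩ s ∩ t i := by
    rw [← inter_iUnion]; exact subset_inter subset_rfl (inter_subset_right.trans hst)
  refine measure_mono_null hcover (measure_iUnion_null fun i => ?_)
  rw [← Measure.restrict_apply' (ht i)]
  exact h i (by rw [Measure.restrict_apply' (ht i)]; exact measure_mono_null inter_subset_left hνA)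

lemma Measure.restrict_Ioo_absolutelyContinuous_of_forall_Ioc {μ ν : Measure ℝ} {c d : ℝ}
    (h : ∀ a b, c < a → a < b → b < d → μ.restrict (Ioc a b) ≪ ν.restrict (Ioc a b)) :
    μ.restrict (Ioo c d) ≪ ν.restrict (Ioo c d) := by
  let ι := {pq : ℚ × ℚ // c < pq.1 ∧ (pq.1 : ℝ) < pq.2 ∧ (pq.2 : ℝ) < d}
  refine Measure.AbsolutelyContinuous.restrict_of_subset_iUnion (t := fun i : ι => Ioc i.1.1 i.1.2)
    (fun _ => measurableSet_Ioc) (fun t ⟨hct, htd⟩ => ?_) fun i => h _ _ i.2.1 i.2.2.1 i.2.2.2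
  obtain ⟨p, hcp, hpt⟩ := exists_rat_btwn hct
  obtain ⟨q, htq, hqd⟩ := exists_rat_btwn htd
  exact mem_iUnion.mpr ⟨⟨(p, q), hcp, hpt.trans htq, hqd⟩, hpt, htq.le⟩

lemma Measure.AbsolutelyContinuous.restrict_union {α : Type*} [MeasurableSpace α]
    {μ ν : Measure α} {s t : Set α} (hs : μ.restrict s ≪ ν.restrict s)
    (ht : μ.restrict t ≪ ν.restrict t) : μ.restrict (s ∪ t) ≪ ν.restrict (s ∪ t) := by
  have hsub : ∀ u ⊆ s ∪ t, ν.restrict u ≪ ν.restrict (s ∪ t) := fun u hu =>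
    Measure.absolutelyContinuous_of_le (Measure.restrict_mono hu le_rfl)
  exact (Measure.absolutelyContinuous_of_le (Measure.restrict_union_le s t)).trans
    (Measure.AbsolutelyContinuous.add_left_iff.mpr
      ⟨hs.trans (hsub s subset_union_left), ht.trans (hsub t subset_union_right)⟩)

lemma Measure.restrict_singleton_absolutelyContinuous {α : Type*} [MeasurableSpace α]
    {μ ν : Measure α} {a : α} (h : ν {a} = 0 → μ {a} = 0) :
    μ.restrict {a} ≪ ν.restrict {a} := by
  refine Measure.AbsolutelyContinuous.mk fun A hA hνA => ?_
  rw [Measure.restrict_apply hA] at hνA ⊢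
  by_cases haA : a ∈ A
  · rw [inter_eq_right.mpr (singleton_subset_iff.mpr haA)] at hνA ⊢
    exact h hνA
  · simp [haA]

lemma exists_isLeast_measure_Ioi_eq_zero {μ : Measure ℝ} {b₀ : ℝ} (hb₀ : μ (Ioi b₀) ≠ 0)
    (h : ∃ b, μ (Ioi b) = 0) : ∃ c, b₀ < c ∧ IsLeast {b | μ (Ioi b) = 0} c := by
  have hlow : ∀ b ∈ {b | μ (Ioi b) = 0}, b₀ ≤ b := fun b hb => by
    by_contra! hlt
    exact hb₀ (measure_mono_null (Ioi_subset_Ioi hlt.le) hb)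
  set c := sInf {b | μ (Ioi b) = 0}
  have hc : μ (Ioi c) = 0 := by
    have hcover : Ioi c ⊆ ⋃ n : ℕ, Ioi (c + 1 / (n + 1)) := fun t (ht : c < t) => by
      obtain ⟨n, hn⟩ := exists_nat_one_div_lt (sub_pos.mpr ht)
      exact mem_iUnion.mpr ⟨n, show c + 1 / (n + 1) < t by linarith⟩
    refine measure_mono_null hcover (measure_iUnion_null fun n => ?_)
    obtain ⟨b, hb, hbc⟩ := exists_lt_of_csInf_lt h (lt_add_of_pos_right c (Nat.one_div_pos_of_nat))
    exact measure_mono_null (Ioi_subset_Ioi hbc.le) hb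
  exact ⟨c, (le_csInf h hlow).lt_of_ne fun hb₀c => hb₀ (hb₀c ▸ hc), hc,
    fun b hb => csInf_le ⟨b₀, hlow⟩ hb⟩

lemma continuousAt_setIntegral_Ioi {E : Type*} [NormedAddCommGroup E] [NormedSpace ℝ E]
    {μ : Measure ℝ} {f : ℝ → E} {a t : ℝ} (hat : a < t) (hf : IntegrableOn f (Ioi a) μ)
    (ht : μ {t} = 0) : ContinuousAt (fun b => ∫ x in Ioi b, f x ∂μ) t := by
  rw [continuousAt_iff_continuous_left_right]
  refine ⟨?_, (hf.mono_set (Ioi_subset_Ioi hat.le)).continuousWithinAt_Ici_primitive_Ioi⟩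
  have hsplit : ∀ b ∈ Icc a t,
      ∫ x in Ioi b, f x ∂μ = (∫ x in Ioi a, f x ∂μ) - ∫ x in a..b, f x ∂μ := fun b hb => by
    rw [← intervalIntegral.integral_Ioi_sub_Ioi hf hb.1, sub_sub_cancel]
  have hprim : ContinuousWithinAt (fun b => ∫ x in a..b, f x ∂μ) (Icc a t) t :=
    intervalIntegral.continuousWithinAt_primitive ht (by
      simpa [hat.le] using (intervalIntegrable_iff_integrableOn_Ioc_of_le hat.le).2
        (hf.mono_set Ioc_subset_Ioi_self))
  exact (continuousWithinAt_Icc_iff_Iic hat).1 <|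
    (continuousWithinAt_const.sub hprim).congr hsplit (hsplit t (right_mem_Icc.2 hat.le))

lemma continuousWithinAt_root_of_strictMonoOn {ψ : ℝ → ℝ → ℝ} {u : ℝ → ℝ} {s : Set ℝ} {t : ℝ}
    (ht : t ∈ s) (hmono : ∀ r ∈ s, StrictMonoOn (ψ r) (Ici 0))
    (hroot : ∀ r ∈ s, 0 ≤ u r ∧ ψ r (u r) = 0)
    (hcont : ∀ lam, 0 ≤ lam → ContinuousWithinAt (fun r => ψ r lam) s t) :
    ContinuousWithinAt u s t := by
  obtain ⟨hut, hψt⟩ := hroot t ht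
  refine tendsto_order.2 ⟨fun lam hlam => ?_, fun lam hlam => ?_⟩
  · rcases lt_or_ge lam 0 with hl | hl
    · filter_upwards [self_mem_nhdsWithin] with r hr using hl.trans_le (hroot r hr).1
    · have hneg : ψ t lam < 0 := hψt ▸ hmono t ht hl hut hlam
      filter_upwards [self_mem_nhdsWithin, (hcont lam hl).eventually_lt_const hneg] with r hr hψr
      rw [← (hmono r hr).lt_iff_lt hl (hroot r hr).1, (hroot r hr).2]
      exact hψr
  · have hl : 0 ≤ lam := hut.trans hlam.le
    have hpos : 0 < ψ t lam := hψt ▸ hmono t ht hut hl hlam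
    filter_upwards [self_mem_nhdsWithin, (hcont lam hl).eventually_const_lt hpos] with r hr hψr
    rw [← (hmono r hr).lt_iff_lt (hroot r hr).1 hl, (hroot r hr).2]
    exact hψr

lemma sub_mul_mul_exp_neg_le_exp_neg_sub (v w θ : ℝ) :
    (v - w) * θ * Real.exp (-v * θ) ≤ Real.exp (-w * θ) - Real.exp (-v * θ) := by
  have h : Real.exp (-w * θ) = Real.exp (-v * θ) * Real.exp ((v - w) * θ) := by
    rw [← Real.exp_add]; ring_nf
  nlinarith [Real.add_one_le_exp ((v - w) * θ), Real.exp_pos (-v * θ)]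

lemma sub_mul_mul_exp_neg_lt_exp_neg_sub {v w θ : ℝ} (h : (v - w) * θ ≠ 0) :
    (v - w) * θ * Real.exp (-v * θ) < Real.exp (-w * θ) - Real.exp (-v * θ) := by
  have h' : Real.exp (-w * θ) = Real.exp (-v * θ) * Real.exp ((v - w) * θ) := by
    rw [← Real.exp_add]; ring_nf
  nlinarith [Real.add_one_lt_exp h, Real.exp_pos (-v * θ)]

lemma exp_neg_sub_exp_neg_le {v w θ : ℝ} (hw : 0 ≤ w) (hwv : w ≤ v) (hθ : 0 ≤ θ) :
    Real.exp (-w * θ) - Real.exp (-v * θ) ≤ (v - w) * θ := by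
  have h := sub_mul_mul_exp_neg_le_exp_neg_sub w v θ
  have h1 : Real.exp (-w * θ) ≤ 1 := Real.exp_le_one_iff.mpr (by nlinarith)
  nlinarith [mul_nonneg (sub_nonneg.mpr hwv) hθ]

noncomputable def phiIntegrand (lam θ : ℝ) : ℝ :=
  Real.exp (-lam * θ) - 1 + lam * θ

lemma phiIntegrand_zero_left (θ : ℝ) : phiIntegrand 0 θ = 0 := by
  simp [phiIntegrand]

-- `∂_λ phiIntegrand λ θ = θ (1 - e^{-λθ})`, which is at most `θ min(1, λθ)`.
lemma phiIntegrand_sub_mem_Icc {v w θ : ℝ} (hw : 0 ≤ w) (hwv : w ≤ v) (hθ : 0 ≤ θ) :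
    phiIntegrand v θ - phiIntegrand w θ ∈ Icc 0 ((v - w) * (max 1 v * min θ (θ ^ 2))) := by
  simp only [phiIntegrand, mem_Icc]
  have hlow := sub_mul_mul_exp_neg_le_exp_neg_sub v w θ
  have hup := exp_neg_sub_exp_neg_le hw hwv hθ
  refine ⟨by linarith, ?_⟩
  have hv : 0 ≤ v := hw.trans hwv
  have hexp : 1 - Real.exp (-v * θ) ≤ v * θ := by
    nlinarith [Real.add_one_le_exp (-v * θ)]
  have hexp1 : 1 - Real.exp (-v * θ) ≤ 1 := by linarith [Real.exp_pos (-v * θ)]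
  have hkey : θ * (1 - Real.exp (-v * θ)) ≤ max 1 v * min θ (θ ^ 2) := by
    have hm1 := le_max_left 1 v
    have hm2 := le_max_right 1 v
    rcases le_total θ 1 with hθ1 | hθ1
    · rw [min_eq_right (by nlinarith)]
      nlinarith [mul_le_mul_of_nonneg_left hexp hθ]
    · rw [min_eq_left (by nlinarith)]
      nlinarith [mul_le_mul_of_nonneg_left hexp1 hθ]
  nlinarith [mul_le_mul_of_nonneg_left hkey (sub_nonneg.mpr hwv)]

lemma phiIntegrand_sub_pos {v w θ : ℝ} (hw : 0 ≤ w) (hwv : w < v) (hθ : 0 < θ) :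
    0 < phiIntegrand v θ - phiIntegrand w θ := by
  simp only [phiIntegrand]
  have h := sub_mul_mul_exp_neg_lt_exp_neg_sub (v := w) (w := v) (θ := θ)
    (mul_ne_zero (by linarith) hθ.ne')
  nlinarith [Real.exp_le_one_iff.mpr (show -w * θ ≤ 0 by nlinarith), mul_pos (sub_pos.mpr hwv) hθ]

lemma exp_neg_mul_sub_exp_neg_mul_mem_Icc {x v w V : ℝ} (hx : 0 ≤ x) (hw : 0 ≤ w)
    (hwv : w ≤ v) (hvV : v ≤ V) :
    Real.exp (-x * w) - Real.exp (-x * v) ∈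
      Icc (x * Real.exp (-x * V) * (v - w)) (x * (v - w)) := by
  have hcomm : ∀ y, -x * y = -y * x := fun y => by ring
  rw [hcomm, hcomm, hcomm]
  have hlow := sub_mul_mul_exp_neg_le_exp_neg_sub v w x
  have hexp : Real.exp (-V * x) ≤ Real.exp (-v * x) := Real.exp_le_exp.mpr (by nlinarith)
  refine ⟨?_, by linarith [exp_neg_sub_exp_neg_le hw hwv hx]⟩
  nlinarith [mul_nonneg hx (sub_nonneg.mpr hwv)]

structure IsLevyMeasure (π : Measure ℝ) : Prop where
  measure_Iic_zero : π (Iic 0) = 0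
  integrable_min_sq : Integrable (fun θ => min θ (θ ^ 2)) π

namespace IsLevyMeasure

variable {π : Measure ℝ}

lemma ae_pos (hπ : IsLevyMeasure π) : ∀ᵐ θ ∂π, 0 < θ := by
  rw [ae_iff]
  simp only [not_lt]
  exact hπ.measure_Iic_zero

lemma measure_Ioi_pos (hπ : IsLevyMeasure π) (hπ0 : π ≠ 0) : 0 < π (Ioi 0) := by
  refine pos_iff_ne_zero.mpr fun h => hπ0 ?_
  rw [← Measure.measure_univ_eq_zero, ← Iic_union_Ioi (a := (0 : ℝ))]
  exact measure_union_null hπ.measure_Iic_zero h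

lemma measure_Ioi_lt_top (hπ : IsLevyMeasure π) {r : ℝ} (hr : 0 < r) : π (Ioi r) < ⊤ := by
  have hsub : Ioi r ⊆ {θ | min r (r ^ 2) ≤ min θ (θ ^ 2)} := fun θ (hθ : r < θ) =>
    min_le_min hθ.le (by nlinarith)
  exact (measure_mono hsub).trans_lt
    (hπ.integrable_min_sq.measure_ge_lt_top (by positivity))

lemma measure_Ioc_ne_top (hπ : IsLevyMeasure π) {r s : ℝ} (hr : 0 < r) : π (Ioc r s) ≠ ⊤ :=
  ((measure_mono Ioc_subset_Ioi_self).trans_lt (hπ.measure_Ioi_lt_top hr)).ne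

lemma integrableOn_exp_neg_mul (hπ : IsLevyMeasure π) {r lam : ℝ} (hr : 0 < r) (hl : 0 ≤ lam) :
    IntegrableOn (fun θ => Real.exp (-lam * θ)) (Ioi r) π := by
  have : IsFiniteMeasure (π.restrict (Ioi r)) :=
    isFiniteMeasure_restrict.mpr (hπ.measure_Ioi_lt_top hr).ne
  refine Integrable.of_bound (by fun_prop) 1 ?_
  filter_upwards [ae_restrict_mem measurableSet_Ioi] with θ (hθ : r < θ)
  rw [Real.norm_eq_abs, abs_of_pos (Real.exp_pos _)]
  exact Real.exp_le_one_iff.mpr (by nlinarith)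

lemma integrableOn_id (hπ : IsLevyMeasure π) {a : ℝ} (ha : 0 < a) :
    IntegrableOn (fun θ => θ) (Ioi a) π := by
  refine (hπ.integrable_min_sq.integrableOn.const_mul (max 1 a⁻¹)).mono' (by fun_prop) ?_
  filter_upwards [ae_restrict_mem measurableSet_Ioi] with θ (hθ : a < θ)
  have hθ0 : 0 < θ := ha.trans hθ
  rw [Real.norm_eq_abs, abs_of_pos hθ0]
  rcases le_total θ 1 with hθ1 | hθ1
  · rw [min_eq_right (by nlinarith)]
    have h : θ ≤ a⁻¹ * θ ^ 2 := by
      rw [inv_mul_eq_div, le_div_iff₀ ha]; nlinarith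
    nlinarith [le_max_right 1 a⁻¹, sq_nonneg θ]
  · rw [min_eq_left (by nlinarith)]
    nlinarith [le_max_left 1 a⁻¹]

lemma integrableOn_mul_exp_neg_mul (hπ : IsLevyMeasure π) {b V : ℝ} (hb : 0 < b) (hV : 0 ≤ V) :
    IntegrableOn (fun θ => θ * Real.exp (-V * θ)) (Ioi b) π := by
  refine (hπ.integrableOn_id hb).mono' (by fun_prop) ?_
  filter_upwards [ae_restrict_mem measurableSet_Ioi] with θ (hθ : b < θ)
  have hθ0 : 0 < θ := hb.trans hθ
  rw [Real.norm_eq_abs, abs_of_pos (mul_pos hθ0 (Real.exp_pos _))]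
  exact mul_le_of_le_one_right hθ0.le (Real.exp_le_one_iff.mpr (by nlinarith))

lemma setIntegral_mul_exp_neg_mul_pos (hπ : IsLevyMeasure π) {b V : ℝ} (hb : 0 < b)
    (hV : 0 ≤ V) (hπb : π (Ioi b) ≠ 0) : 0 < ∫ θ in Ioi b, θ * Real.exp (-V * θ) ∂π := by
  rw [setIntegral_pos_iff_support_of_nonneg_ae
    (ae_restrict_of_forall_mem measurableSet_Ioi fun θ (hθ : b < θ) =>
      mul_nonneg (by linarith) (Real.exp_pos _).le) (hπ.integrableOn_mul_exp_neg_mul hb hV)]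
  refine (pos_iff_ne_zero.mpr hπb).trans_le (measure_mono fun θ (hθ : b < θ) => ⟨?_, hθ⟩)
  exact mul_ne_zero (by linarith) (Real.exp_pos _).ne'

lemma integrable_phiIntegrand (hπ : IsLevyMeasure π) {lam : ℝ} (hl : 0 ≤ lam) :
    Integrable (phiIntegrand lam) π := by
  refine (hπ.integrable_min_sq.const_mul (lam * max 1 lam)).mono'
    (by unfold phiIntegrand; fun_prop) ?_
  filter_upwards [hπ.ae_pos] with θ hθ
  have h := phiIntegrand_sub_mem_Icc le_rfl hl hθ.le
  rw [phiIntegrand_zero_left, sub_zero, sub_zero] at h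
  rw [Real.norm_eq_abs, abs_of_nonneg h.1]
  linarith [h.2]

end IsLevyMeasure

section Phi

variable {α β : ℝ} {π : Measure ℝ}

lemma Phi_zero : Phi α β π 0 = 0 := by
  simp [Phi]

lemma Phi_sub_Phi (hπ : IsLevyMeasure π) {v w : ℝ} (hv : 0 ≤ v) (hw : 0 ≤ w) :
    Phi α β π v - Phi α β π w = α * (v - w) + β * (v ^ 2 - w ^ 2) +
      ∫ θ, phiIntegrand v θ - phiIntegrand w θ ∂π := by
  rw [integral_sub (hπ.integrable_phiIntegrand hv) (hπ.integrable_phiIntegrand hw)]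
  simp only [Phi, phiIntegrand]
  ring

lemma Phi_sub_Phi_le (hπ : IsLevyMeasure π) {v w : ℝ} (hw : 0 ≤ w) (hwv : w ≤ v) :
    Phi α β π v - Phi α β π w ≤
      (v - w) * (α + β * (v + w) + max 1 v * ∫ θ, min θ (θ ^ 2) ∂π) := by
  have hint : ∫ θ, phiIntegrand v θ - phiIntegrand w θ ∂π ≤
      ∫ θ, (v - w) * (max 1 v * min θ (θ ^ 2)) ∂π := by
    refine integral_mono_ae ((hπ.integrable_phiIntegrand (hw.trans hwv)).sub
      (hπ.integrable_phiIntegrand hw)) (hπ.integrable_min_sq.const_mul _ |>.const_mul _) ?_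
    filter_upwards [hπ.ae_pos] with θ hθ
    exact (phiIntegrand_sub_mem_Icc hw hwv hθ.le).2
  rw [integral_const_mul, integral_const_mul] at hint
  rw [Phi_sub_Phi hπ (hw.trans hwv) hw]
  linarith

lemma strictMonoOn_Phi (hα : 0 ≤ α) (hβ : 0 ≤ β) (hπ : IsLevyMeasure π) (hπ0 : π ≠ 0) :
    StrictMonoOn (Phi α β π) (Ici 0) := by
  intro w (hw : 0 ≤ w) v (hv : 0 ≤ v) hwv
  have hpos : 0 < ∫ θ, phiIntegrand v θ - phiIntegrand w θ ∂π := by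
    rw [integral_pos_iff_support_of_nonneg_ae (f := fun θ => phiIntegrand v θ - phiIntegrand w θ)
      ?_ ((hπ.integrable_phiIntegrand hv).sub (hπ.integrable_phiIntegrand hw))]
    · refine (hπ.measure_Ioi_pos hπ0).trans_le (measure_mono fun θ (hθ : 0 < θ) => ?_)
      exact (phiIntegrand_sub_pos hw hwv hθ).ne'
    · filter_upwards [hπ.ae_pos] with θ hθ
      exact (phiIntegrand_sub_mem_Icc hw hwv.le hθ.le).1
  have h := Phi_sub_Phi (α := α) (β := β) hπ hv hw
  nlinarith [mul_nonneg hα (sub_nonneg.mpr hwv.le),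
    mul_nonneg hβ (sub_nonneg.mpr (pow_le_pow_left₀ hw hwv.le 2))]

end Phi

noncomputable def tailLaplace (π : Measure ℝ) (r lam : ℝ) : ℝ :=
  ∫ θ in Ioi r, Real.exp (-lam * θ) ∂π

section tailLaplace

variable {α β : ℝ} {π : Measure ℝ}

lemma PhiIoi_eq_measure_Ioi_iff (hπ : IsLevyMeasure π) {r lam : ℝ} (hr : 0 < r) (hl : 0 ≤ lam) :
    PhiIoi α β π r lam = (π (Ioi r)).toReal ↔ Phi α β π lam = tailLaplace π r lam := by
  have h : ∫ θ in Ioi r, (1 - Real.exp (-lam * θ)) ∂π =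
      (π (Ioi r)).toReal - tailLaplace π r lam := by
    have hone : IntegrableOn (fun _ => (1 : ℝ)) (Ioi r) π :=
      integrableOn_const (hπ.measure_Ioi_lt_top hr).ne
    rw [integral_sub hone (hπ.integrableOn_exp_neg_mul hr hl), setIntegral_const, smul_eq_mul,
      mul_one, measureReal_def, tailLaplace]
  rw [PhiIoi, h]
  constructor <;> intro h' <;> linarith

lemma antitoneOn_tailLaplace (hπ : IsLevyMeasure π) {r : ℝ} (hr : 0 < r) :
    AntitoneOn (tailLaplace π r) (Ici 0) := by
  intro w (hw : 0 ≤ w) v (hv : 0 ≤ v) hwv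
  refine setIntegral_mono_on (hπ.integrableOn_exp_neg_mul hr hv)
    (hπ.integrableOn_exp_neg_mul hr hw) measurableSet_Ioi fun θ (hθ : r < θ) => ?_
  exact Real.exp_le_exp.mpr (by nlinarith)

lemma strictMonoOn_Phi_sub_tailLaplace (hα : 0 ≤ α) (hβ : 0 ≤ β) (hπ : IsLevyMeasure π)
    (hπ0 : π ≠ 0) {r : ℝ} (hr : 0 < r) :
    StrictMonoOn (fun lam => Phi α β π lam - tailLaplace π r lam) (Ici 0) := fun w hw v hv hwv =>
  by linarith [strictMonoOn_Phi hα hβ hπ hπ0 hw hv hwv, antitoneOn_tailLaplace hπ hr hw hv hwv.le]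

lemma tailLaplace_eq_setIntegral_Ioc_add (hπ : IsLevyMeasure π) {r s lam : ℝ} (hr : 0 < r)
    (hrs : r ≤ s) (hl : 0 ≤ lam) :
    tailLaplace π r lam = ∫ θ in Ioc r s, Real.exp (-lam * θ) ∂π + tailLaplace π s lam := by
  have hint := hπ.integrableOn_exp_neg_mul hr hl
  rw [tailLaplace, tailLaplace, ← Ioc_union_Ioi_eq_Ioi hrs,
    setIntegral_union Ioc_disjoint_Ioi_same measurableSet_Ioi
      (hint.mono_set Ioc_subset_Ioi_self) (hint.mono_set (Ioi_subset_Ioi hrs))]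

lemma tailLaplace_sub_tailLaplace (hπ : IsLevyMeasure π) {s v w : ℝ} (hs : 0 < s) (hv : 0 ≤ v)
    (hw : 0 ≤ w) : tailLaplace π s w - tailLaplace π s v =
      ∫ θ in Ioi s, (Real.exp (-w * θ) - Real.exp (-v * θ)) ∂π :=
  (integral_sub (hπ.integrableOn_exp_neg_mul hs hw) (hπ.integrableOn_exp_neg_mul hs hv)).symm

lemma tailLaplace_sub_tailLaplace_le (hπ : IsLevyMeasure π) {a s v w : ℝ} (ha : 0 < a)
    (has : a ≤ s) (hw : 0 ≤ w) (hwv : w ≤ v) :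
    tailLaplace π s w - tailLaplace π s v ≤ (v - w) * ∫ θ in Ioi a, θ ∂π := by
  have hs := ha.trans_le has
  rw [tailLaplace_sub_tailLaplace hπ hs (hw.trans hwv) hw, ← integral_const_mul]
  calc ∫ θ in Ioi s, (Real.exp (-w * θ) - Real.exp (-v * θ)) ∂π
      ≤ ∫ θ in Ioi s, (v - w) * θ ∂π := by
        refine setIntegral_mono_on ((hπ.integrableOn_exp_neg_mul hs hw).sub
          (hπ.integrableOn_exp_neg_mul hs (hw.trans hwv)))
          (((hπ.integrableOn_id ha).mono_set (Ioi_subset_Ioi has)).const_mul _)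
          measurableSet_Ioi fun θ (hθ : s < θ) => exp_neg_sub_exp_neg_le hw hwv (by linarith)
    _ ≤ ∫ θ in Ioi a, (v - w) * θ ∂π :=
        setIntegral_mono_set ((hπ.integrableOn_id ha).const_mul _)
          (ae_restrict_of_forall_mem measurableSet_Ioi fun θ (hθ : a < θ) =>
            mul_nonneg (sub_nonneg.mpr hwv) (by linarith))
          (Ioi_subset_Ioi has).eventuallyLE

lemma le_tailLaplace_sub_tailLaplace (hπ : IsLevyMeasure π) {b s v w V : ℝ} (hs : 0 < s)
    (hsb : s ≤ b) (hw : 0 ≤ w) (hwv : w ≤ v) (hvV : v ≤ V) :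
    (v - w) * ∫ θ in Ioi b, θ * Real.exp (-V * θ) ∂π ≤
      tailLaplace π s w - tailLaplace π s v := by
  have hb := hs.trans_le hsb
  have hv := hw.trans hwv
  have hdiff : IntegrableOn (fun θ => Real.exp (-w * θ) - Real.exp (-v * θ)) (Ioi s) π :=
    (hπ.integrableOn_exp_neg_mul hs hw).sub (hπ.integrableOn_exp_neg_mul hs hv)
  rw [tailLaplace_sub_tailLaplace hπ hs hv hw, ← integral_const_mul]
  calc ∫ θ in Ioi b, (v - w) * (θ * Real.exp (-V * θ)) ∂π
      ≤ ∫ θ in Ioi b, (Real.exp (-w * θ) - Real.exp (-v * θ)) ∂π := by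
        refine setIntegral_mono_on ((hπ.integrableOn_mul_exp_neg_mul hb (hv.trans hvV)).const_mul _)
          (hdiff.mono_set (Ioi_subset_Ioi hsb)) measurableSet_Ioi fun θ (hθ : b < θ) => ?_
        have hexp : Real.exp (-V * θ) ≤ Real.exp (-v * θ) := Real.exp_le_exp.mpr (by nlinarith)
        have := sub_mul_mul_exp_neg_le_exp_neg_sub v w θ
        nlinarith [mul_nonneg (sub_nonneg.mpr hwv) (hb.trans hθ).le]
    _ ≤ ∫ θ in Ioi s, (Real.exp (-w * θ) - Real.exp (-v * θ)) ∂π :=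
        setIntegral_mono_set hdiff
          (ae_restrict_of_forall_mem measurableSet_Ioi fun θ (hθ : s < θ) =>
            sub_nonneg.mpr (Real.exp_le_exp.mpr (by nlinarith)))
          (Ioi_subset_Ioi hsb).eventuallyLE

lemma setIntegral_Ioc_exp_neg_mul_mem_Icc (hπ : IsLevyMeasure π) {r s b lam V : ℝ} (hr : 0 < r)
    (hsb : s ≤ b) (hl : 0 ≤ lam) (hlV : lam ≤ V) :
    ∫ θ in Ioc r s, Real.exp (-lam * θ) ∂π ∈
      Icc (Real.exp (-V * b) * π.real (Ioc r s)) (π.real (Ioc r s)) := by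
  have hfin : π (Ioc r s) ≠ ⊤ := hπ.measure_Ioc_ne_top hr
  have hint := (hπ.integrableOn_exp_neg_mul hr hl).mono_set (Ioc_subset_Ioi_self : Ioc r s ⊆ _)
  constructor
  · rw [mul_comm, ← smul_eq_mul, ← setIntegral_const]
    refine setIntegral_mono_on (integrableOn_const hfin) hint measurableSet_Ioc
      fun θ ⟨hrθ, hθs⟩ => Real.exp_le_exp.mpr ?_
    nlinarith
  · rw [← mul_one (π.real _), ← smul_eq_mul, ← setIntegral_const]
    refine setIntegral_mono_on hint (integrableOn_const hfin) measurableSet_Ioc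
      fun θ ⟨hrθ, _⟩ => Real.exp_le_one_iff.mpr ?_
    nlinarith

lemma continuousWithinAt_tailLaplace (hπ : IsLevyMeasure π) {t lam : ℝ} (ht : 0 < t)
    (hl : 0 ≤ lam) : ContinuousWithinAt (fun r => tailLaplace π r lam) (Ici t) t :=
  (hπ.integrableOn_exp_neg_mul ht hl).continuousWithinAt_Ici_primitive_Ioi

lemma continuousAt_tailLaplace (hπ : IsLevyMeasure π) {t lam : ℝ} (ht : 0 < t) (hl : 0 ≤ lam)
    (hπt : π {t} = 0) : ContinuousAt (fun r => tailLaplace π r lam) t :=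
  continuousAt_setIntegral_Ioi (half_lt_self ht)
    (hπ.integrableOn_exp_neg_mul (half_pos ht) hl) hπt

end tailLaplace

def IsTailRoot (α β : ℝ) (π : Measure ℝ) (inv : ℝ → ℝ) : Prop :=
  ∀ r, 0 < r → 0 ≤ inv r ∧ Phi α β π (inv r) = tailLaplace π r (inv r)

namespace IsTailRoot

variable {α β : ℝ} {π : Measure ℝ} {inv : ℝ → ℝ} {x : ℝ} {G : StieltjesFunction ℝ}

lemma root_sub_eq_zero (hinv : IsTailRoot α β π inv) {r : ℝ} (hr : 0 < r) :
    0 ≤ inv r ∧ Phi α β π (inv r) - tailLaplace π r (inv r) = 0 :=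
  ⟨(hinv r hr).1, sub_eq_zero.mpr (hinv r hr).2⟩

lemma antitoneOn (hα : 0 ≤ α) (hβ : 0 ≤ β) (hπ : IsLevyMeasure π) (hπ0 : π ≠ 0)
    (hinv : IsTailRoot α β π inv) : AntitoneOn inv (Ioi 0) := by
  intro r (hr : 0 < r) s (hs : 0 < s) hrs
  by_contra! hlt
  have hψ := strictMonoOn_Phi_sub_tailLaplace hα hβ hπ hπ0 hs (hinv r hr).1 (hinv s hs).1 hlt
  have hsplit := tailLaplace_eq_setIntegral_Ioc_add hπ hr hrs (hinv r hr).1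
  have hIoc : 0 ≤ ∫ θ in Ioc r s, Real.exp (-inv r * θ) ∂π :=
    setIntegral_nonneg measurableSet_Ioc fun θ _ => (Real.exp_pos _).le
  simp only [(hinv s hs).2, sub_self] at hψ
  linarith [(hinv r hr).2]

lemma continuousWithinAt_Ici (hα : 0 ≤ α) (hβ : 0 ≤ β) (hπ : IsLevyMeasure π) (hπ0 : π ≠ 0)
    (hinv : IsTailRoot α β π inv) {t : ℝ} (ht : 0 < t) : ContinuousWithinAt inv (Ici t) t :=
  continuousWithinAt_root_of_strictMonoOn self_mem_Ici
    (fun _ hr => strictMonoOn_Phi_sub_tailLaplace hα hβ hπ hπ0 (ht.trans_le hr))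
    (fun _ hr => hinv.root_sub_eq_zero (ht.trans_le hr))
    (fun _ hl => continuousWithinAt_const.sub (continuousWithinAt_tailLaplace hπ ht hl))

lemma continuousAt (hα : 0 ≤ α) (hβ : 0 ≤ β) (hπ : IsLevyMeasure π) (hπ0 : π ≠ 0)
    (hinv : IsTailRoot α β π inv) {t : ℝ} (ht : 0 < t) (hπt : π {t} = 0) :
    ContinuousAt inv t :=
  (continuousWithinAt_root_of_strictMonoOn (s := Ioi 0) ht
    (fun _ hr => strictMonoOn_Phi_sub_tailLaplace hα hβ hπ hπ0 hr)
    (fun _ hr => hinv.root_sub_eq_zero hr)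
    (fun _ hl => (continuousAt_const.sub
      (continuousAt_tailLaplace hπ ht hl hπt)).continuousWithinAt)).continuousAt
    (Ioi_mem_nhds ht)

lemma eq_zero_of_measure_Ioi_eq_zero (hα : 0 ≤ α) (hβ : 0 ≤ β) (hπ : IsLevyMeasure π) (hπ0 : π ≠ 0)
    (hinv : IsTailRoot α β π inv) {t : ℝ} (ht : 0 < t) (hπt : π (Ioi t) = 0) : inv t = 0 := by
  have h : Phi α β π (inv t) = Phi α β π 0 := by
    rw [(hinv t ht).2, Phi_zero, tailLaplace, Measure.restrict_eq_zero.mpr hπt,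
      integral_zero_measure]
  exact (strictMonoOn_Phi hα hβ hπ hπ0).injOn (hinv t ht).1 self_mem_Ici h

lemma setIntegral_Ioc_eq (hπ : IsLevyMeasure π) (hinv : IsTailRoot α β π inv) {r s : ℝ}
    (hr : 0 < r) (hrs : r ≤ s) :
    ∫ θ in Ioc r s, Real.exp (-inv r * θ) ∂π = Phi α β π (inv r) - Phi α β π (inv s) +
      (tailLaplace π s (inv s) - tailLaplace π s (inv r)) := by
  have hsplit := tailLaplace_eq_setIntegral_Ioc_add hπ hr hrs (hinv r hr).1
  rw [(hinv r hr).2, (hinv s (hr.trans_le hrs)).2]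
  linarith

lemma exists_measureReal_Ioc_le_mul_sub (hα : 0 ≤ α) (hβ : 0 ≤ β) (hπ : IsLevyMeasure π)
    (hπ0 : π ≠ 0) (hinv : IsTailRoot α β π inv) {a b : ℝ} (ha : 0 < a) :
    ∃ K, ∀ r s, a ≤ r → r ≤ s → s ≤ b → π.real (Ioc r s) ≤ K * (inv r - inv s) := by
  set va := inv a
  set M := α + β * (va + va) + max 1 va * ∫ θ, min θ (θ ^ 2) ∂π + ∫ θ in Ioi a, θ ∂π
  refine ⟨Real.exp (va * b) * M, fun r s har hrs hsb => ?_⟩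
  have hr := ha.trans_le har
  have hs := hr.trans_le hrs
  have hw := (hinv s hs).1
  have hwv := hinv.antitoneOn hα hβ hπ hπ0 hr hs hrs
  have hvva := hinv.antitoneOn hα hβ hπ hπ0 ha hr har
  have hPhi : Phi α β π (inv r) - Phi α β π (inv s) ≤
      (inv r - inv s) * (α + β * (va + va) + max 1 va * ∫ θ, min θ (θ ^ 2) ∂π) := by
    refine (Phi_sub_Phi_le hπ hw hwv).trans ?_
    have hmin : 0 ≤ ∫ θ, min θ (θ ^ 2) ∂π :=
      integral_nonneg_of_ae (hπ.ae_pos.mono fun θ hθ => le_min hθ.le (by positivity))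
    gcongr
    exact hwv.trans hvva
  have htail := tailLaplace_sub_tailLaplace_le hπ ha (har.trans hrs) hw hwv
  have hexp := (setIntegral_Ioc_exp_neg_mul_mem_Icc hπ hr hsb (hinv r hr).1 hvva).1
  rw [setIntegral_Ioc_eq hπ hinv hr hrs] at hexp
  have hle : Real.exp (-va * b) * π.real (Ioc r s) ≤ M * (inv r - inv s) := by
    linarith [show M * (inv r - inv s) = (inv r - inv s) *
      (α + β * (va + va) + max 1 va * ∫ θ, min θ (θ ^ 2) ∂π) +
        (inv r - inv s) * ∫ θ in Ioi a, θ ∂π by ring]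
  calc π.real (Ioc r s) = Real.exp (va * b) * (Real.exp (-va * b) * π.real (Ioc r s)) := by
        rw [← mul_assoc, ← Real.exp_add, neg_mul, add_neg_cancel, Real.exp_zero, one_mul]
    _ ≤ Real.exp (va * b) * M * (inv r - inv s) := by
        rw [mul_assoc]; gcongr

lemma exists_pos_mul_sub_le_measureReal_Ioc (hα : 0 ≤ α) (hβ : 0 ≤ β) (hπ : IsLevyMeasure π)
    (hπ0 : π ≠ 0) (hinv : IsTailRoot α β π inv) {a b : ℝ} (ha : 0 < a) (hab : a ≤ b)
    (hπb : π (Ioi b) ≠ 0) :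
    ∃ c, 0 < c ∧ ∀ r s, a ≤ r → r ≤ s → s ≤ b → c * (inv r - inv s) ≤ π.real (Ioc r s) := by
  refine ⟨∫ θ in Ioi b, θ * Real.exp (-inv a * θ) ∂π,
    hπ.setIntegral_mul_exp_neg_mul_pos (ha.trans_le hab) (hinv a ha).1 hπb,
    fun r s har hrs hsb => ?_⟩
  have hr := ha.trans_le har
  have hs := hr.trans_le hrs
  have hwv := hinv.antitoneOn hα hβ hπ hπ0 hr hs hrs
  have hPhi : Phi α β π (inv s) ≤ Phi α β π (inv r) :=
    (strictMonoOn_Phi hα hβ hπ hπ0).monotoneOn (hinv s hs).1 (hinv r hr).1 hwv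
  have htail := le_tailLaplace_sub_tailLaplace hπ hs hsb (hinv s hs).1 hwv
    (hinv.antitoneOn hα hβ hπ hπ0 ha hr har)
  have hexp := (setIntegral_Ioc_exp_neg_mul_mem_Icc hπ hr hsb (hinv r hr).1 le_rfl).2
  rw [setIntegral_Ioc_eq hπ hinv hr hrs] at hexp
  linarith


lemma restrict_Ioc_absolutelyContinuous (hα : 0 ≤ α) (hβ : 0 ≤ β) (hπ : IsLevyMeasure π)
    (hπ0 : π ≠ 0) (hinv : IsTailRoot α β π inv) (hx : 0 < x)
    (hG : ∀ r, 0 < r → G r = Real.exp (-x * inv r)) {a b : ℝ} (ha : 0 < a) :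
    π.restrict (Ioc a b) ≪ G.measure.restrict (Ioc a b) := by
  obtain ⟨K, hK⟩ := hinv.exists_measureReal_Ioc_le_mul_sub hα hβ hπ hπ0 (b := b) ha
  have hc : 0 < x * Real.exp (-x * inv a) := by positivity
  refine Measure.restrict_Ioc_absolutelyContinuous_of_le_mul
    (C := ENNReal.ofReal (max K 0 / (x * Real.exp (-x * inv a)))) ENNReal.ofReal_ne_top
    (hπ.measure_Ioc_ne_top ha)
    (by rw [G.measure_Ioc]; exact ENNReal.ofReal_ne_top) fun r s har hrs hsb => ?_
  have hr := ha.trans_le har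
  have hs := hr.trans_le hrs
  have hwv := hinv.antitoneOn hα hβ hπ hπ0 hr hs hrs
  have hinc := (exp_neg_mul_sub_exp_neg_mul_mem_Icc hx.le (hinv s hs).1 hwv
    (hinv.antitoneOn hα hβ hπ hπ0 ha hr har)).1
  rw [G.measure_Ioc, hG s hs, hG r hr, ← ENNReal.ofReal_mul (by positivity),
    ← ofReal_measureReal (hπ.measure_Ioc_ne_top hr)]
  refine ENNReal.ofReal_le_ofReal ((hK r s har hrs hsb).trans ?_)
  calc K * (inv r - inv s) ≤ max K 0 * (inv r - inv s) :=
        mul_le_mul_of_nonneg_right (le_max_left K 0) (sub_nonneg.mpr hwv)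
    _ = max K 0 / (x * Real.exp (-x * inv a)) * (x * Real.exp (-x * inv a) * (inv r - inv s)) := by
        field_simp
    _ ≤ _ := mul_le_mul_of_nonneg_left hinc (by positivity)

lemma measure_restrict_Ioc_absolutelyContinuous (hα : 0 ≤ α) (hβ : 0 ≤ β)
    (hπ : IsLevyMeasure π) (hπ0 : π ≠ 0) (hinv : IsTailRoot α β π inv) (hx : 0 < x)
    (hG : ∀ r, 0 < r → G r = Real.exp (-x * inv r)) {a b : ℝ} (ha : 0 < a) (hab : a ≤ b)
    (hπb : π (Ioi b) ≠ 0) :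
    G.measure.restrict (Ioc a b) ≪ π.restrict (Ioc a b) := by
  obtain ⟨c, hc, hcle⟩ := hinv.exists_pos_mul_sub_le_measureReal_Ioc hα hβ hπ hπ0 ha hab hπb
  refine Measure.restrict_Ioc_absolutelyContinuous_of_le_mul (C := ENNReal.ofReal (x / c))
    ENNReal.ofReal_ne_top (by rw [G.measure_Ioc]; exact ENNReal.ofReal_ne_top)
    (hπ.measure_Ioc_ne_top ha)
    fun r s har hrs hsb => ?_
  have hr := ha.trans_le har
  have hs := hr.trans_le hrs
  have hwv := hinv.antitoneOn hα hβ hπ hπ0 hr hs hrs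
  have hinc := (exp_neg_mul_sub_exp_neg_mul_mem_Icc hx.le (hinv s hs).1 hwv le_rfl).2
  rw [G.measure_Ioc, hG s hs, hG r hr, ← ofReal_measureReal (hπ.measure_Ioc_ne_top hr),
    ← ENNReal.ofReal_mul (by positivity)]
  refine ENNReal.ofReal_le_ofReal (hinc.trans ?_)
  calc x * (inv r - inv s) = x / c * (c * (inv r - inv s)) := by field_simp
    _ ≤ _ := mul_le_mul_of_nonneg_left (hcle r s har hrs hsb) (by positivity)

lemma measure_singleton_eq_zero (hα : 0 ≤ α) (hβ : 0 ≤ β) (hπ : IsLevyMeasure π) (hπ0 : π ≠ 0)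
    (hinv : IsTailRoot α β π inv) (hG : ∀ r, 0 < r → G r = Real.exp (-x * inv r)) {t : ℝ}
    (ht : 0 < t) (hπt : π {t} = 0) : G.measure {t} = 0 := by
  have hcont : ContinuousAt G t :=
    (Real.continuous_exp.continuousAt.comp
      ((hinv.continuousAt hα hβ hπ hπ0 ht hπt).const_mul (-x))).congr
      (eventually_of_mem (Ioi_mem_nhds ht) fun r hr => (hG r hr).symm)
  rw [G.measure_singleton, (G.mono.continuousWithinAt_Iio_iff_leftLim_eq).1
    hcont.continuousWithinAt, sub_self, ENNReal.ofReal_zero]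

lemma measure_Ioi_eq_zero (hα : 0 ≤ α) (hβ : 0 ≤ β) (hπ : IsLevyMeasure π) (hπ0 : π ≠ 0)
    (hinv : IsTailRoot α β π inv) (hG : ∀ r, 0 < r → G r = Real.exp (-x * inv r)) {t : ℝ}
    (ht : 0 < t) (hπt : π (Ioi t) = 0) : G.measure (Ioi t) = 0 := by
  have hone : ∀ r, t ≤ r → G r = 1 := fun r htr => by
    rw [hG r (ht.trans_le htr), hinv.eq_zero_of_measure_Ioi_eq_zero hα hβ hπ hπ0 (ht.trans_le htr)
      (measure_mono_null (Ioi_subset_Ioi htr) hπt), mul_zero, Real.exp_zero]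
  have hlim : Tendsto G atTop (𝓝 1) :=
    tendsto_const_nhds.congr' (eventually_ge_atTop t |>.mono fun r hr => (hone r hr).symm)
  rw [G.measure_Ioi hlim, hone t le_rfl, sub_self, ENNReal.ofReal_zero]

lemma restrict_Ioi_zero_absolutelyContinuous (hα : 0 ≤ α) (hβ : 0 ≤ β) (hπ : IsLevyMeasure π)
    (hπ0 : π ≠ 0) (hinv : IsTailRoot α β π inv) (hx : 0 < x)
    (hG : ∀ r, 0 < r → G r = Real.exp (-x * inv r)) :
    π.restrict (Ioi 0) ≪ G.measure.restrict (Ioi 0) :=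
  Measure.AbsolutelyContinuous.restrict_of_subset_iUnion (t := fun n : ℕ => Ioo 0 (n : ℝ))
    (fun _ => measurableSet_Ioo)
    (fun t (ht : 0 < t) => mem_iUnion.mpr ((exists_nat_gt t).imp fun _ hn => ⟨ht, hn⟩))
    fun _ => Measure.restrict_Ioo_absolutelyContinuous_of_forall_Ioc fun _ _ ha _ _ =>
      hinv.restrict_Ioc_absolutelyContinuous hα hβ hπ hπ0 hx hG ha

lemma measure_restrict_Ioo_absolutelyContinuous (hα : 0 ≤ α) (hβ : 0 ≤ β)
    (hπ : IsLevyMeasure π) (hπ0 : π ≠ 0) (hinv : IsTailRoot α β π inv) (hx : 0 < x)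
    (hG : ∀ r, 0 < r → G r = Real.exp (-x * inv r)) {c : ℝ} (hc : ∀ b < c, π (Ioi b) ≠ 0) :
    G.measure.restrict (Ioo 0 c) ≪ π.restrict (Ioo 0 c) :=
  Measure.restrict_Ioo_absolutelyContinuous_of_forall_Ioc fun _ _ ha hab hbc =>
    hinv.measure_restrict_Ioc_absolutelyContinuous hα hβ hπ hπ0 hx hG ha hab.le (hc _ hbc)

lemma measure_restrict_Ioi_zero_absolutelyContinuous (hα : 0 ≤ α) (hβ : 0 ≤ β)
    (hπ : IsLevyMeasure π) (hπ0 : π ≠ 0) (hinv : IsTailRoot α β π inv) (hx : 0 < x)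
    (hG : ∀ r, 0 < r → G r = Real.exp (-x * inv r)) :
    G.measure.restrict (Ioi 0) ≪ π.restrict (Ioi 0) := by
  by_cases hZ : ∃ b, π (Ioi b) = 0
  · obtain ⟨c, hc0, hcZ, hcle⟩ :=
      exists_isLeast_measure_Ioi_eq_zero (hπ.measure_Ioi_pos hπ0).ne' hZ
    rw [← Ioo_union_Ici_eq_Ioi hc0, ← Ioi_insert, insert_eq]
    refine Measure.AbsolutelyContinuous.restrict_union
      (hinv.measure_restrict_Ioo_absolutelyContinuous hα hβ hπ hπ0 hx hG
        fun b hbc hb => (hcle hb).not_gt hbc)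
      (Measure.AbsolutelyContinuous.restrict_union (Measure.restrict_singleton_absolutelyContinuous
        (hinv.measure_singleton_eq_zero hα hβ hπ hπ0 hG hc0)) ?_)
    rw [Measure.restrict_eq_zero.mpr (hinv.measure_Ioi_eq_zero hα hβ hπ hπ0 hG hc0 hcZ)]
    exact Measure.AbsolutelyContinuous.zero _
  · exact Measure.AbsolutelyContinuous.restrict_of_subset_iUnion
      (t := fun n : ℕ => Ioo 0 (n : ℝ)) (fun _ => measurableSet_Ioo)
      (fun t (ht : 0 < t) => mem_iUnion.mpr ((exists_nat_gt t).imp fun _ hn => ⟨ht, hn⟩))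
      fun _ => hinv.measure_restrict_Ioo_absolutelyContinuous hα hβ hπ hπ0 hx hG
        fun b _ hb => hZ ⟨b, hb⟩

end IsTailRoot

theorem global_maximal_jump_mutual_absolute_continuity_general
    (α β : ℝ) (hα : 0 ≤ α) (hβ : 0 ≤ β) (π : Measure ℝ)
    (hsupp : π (Set.Iic 0) = 0)
    (hint : Integrable (fun θ => min θ (θ ^ 2)) π)
    (hπne : π ≠ 0) (x : ℝ) (hx : 0 < x)
    (inv : ℝ → ℝ)
    (hinv : ∀ r : ℝ, 0 < r →
      0 ≤ inv r ∧ PhiIoi α β π r (inv r) = (π (Set.Ioi r)).toReal)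
    (F : ℝ → ℝ) (hF : ∀ r : ℝ, F r = Real.exp (-x * inv r)) :
    MonotoneOn F (Set.Ioi 0) ∧
    (∀ r : ℝ, 0 < r → ContinuousWithinAt F (Set.Ici r) r) ∧
    (∀ r : ℝ, 0 < r → F r ∈ Set.Ioc (0:ℝ) 1) ∧
    (∀ G : StieltjesFunction ℝ, (∀ r : ℝ, 0 < r → G r = F r) →
      ∀ A : Set ℝ, A ⊆ Set.Ioi 0 → MeasurableSet A →
        (G.measure A = 0 ↔ π A = 0)) := by
  have hπ : IsLevyMeasure π := ⟨hsupp, hint⟩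
  have hroot : IsTailRoot α β π inv := fun r hr =>
    ⟨(hinv r hr).1, (PhiIoi_eq_measure_Ioi_iff hπ hr (hinv r hr).1).1 (hinv r hr).2⟩
  obtain rfl : F = fun r => Real.exp (-x * inv r) := funext hF
  refine ⟨fun r hr s hs hrs => Real.exp_le_exp.mpr ?_, fun r hr => ?_,
    fun r hr => ⟨Real.exp_pos _, Real.exp_le_one_iff.mpr ?_⟩, fun G hG A hA _ => ?_⟩
  · nlinarith [hroot.antitoneOn hα hβ hπ hπne hr hs hrs]
  · exact Real.continuous_exp.continuousAt.comp_continuousWithinAt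
      ((hroot.continuousWithinAt_Ici hα hβ hπ hπne hr).const_mul (-x))
  · nlinarith [(hroot r hr).1]
  · rw [← Measure.restrict_eq_self G.measure hA, ← Measure.restrict_eq_self π hA]
    exact ⟨fun h => hroot.restrict_Ioi_zero_absolutelyContinuous hα hβ hπ hπne hx hG h,
      fun h => hroot.measure_restrict_Ioi_zero_absolutelyContinuous hα hβ hπ hπne hx hG h⟩

/-- Theorem 3.8, via the explicit distribution function
`F(r) = exp(-x (Φ^{(r,∞)})⁻¹(π((r,∞))))` of the global maximal jump:
`F` is nondecreasing, right-continuous, `(0,1]`-valued, and its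
Lebesgue–Stieltjes measure on `(0,∞)` and `π` are mutually absolutely continuous. -/
theorem global_maximal_jump_mutual_absolute_continuity
    (α β : ℝ) (hα : 0 ≤ α) (hβ : 0 ≤ β) (π : Measure ℝ)
    (hsupp : π (Set.Iic 0) = 0) (hσ : SigmaFinite π)
    (hint : Integrable (fun θ => min θ (θ ^ 2)) π)
    (hπne : π ≠ 0) (x : ℝ) (hx : 0 < x)
    (inv : ℝ → ℝ)
    (hinv : ∀ r : ℝ, 0 < r →
      0 ≤ inv r ∧ PhiIoi α β π r (inv r) = (π (Set.Ioi r)).toReal)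
    (F : ℝ → ℝ) (hF : ∀ r : ℝ, F r = Real.exp (-x * inv r)) :
    MonotoneOn F (Set.Ioi 0) ∧
    (∀ r : ℝ, 0 < r → ContinuousWithinAt F (Set.Ici r) r) ∧
    (∀ r : ℝ, 0 < r → F r ∈ Set.Ioc (0:ℝ) 1) ∧
    (∀ G : StieltjesFunction ℝ, (∀ r : ℝ, 0 < r → G r = F r) →
      ∀ A : Set ℝ, A ⊆ Set.Ioi 0 → MeasurableSet A →
        (G.measure A = 0 ↔ π A = 0)) :=
  global_maximal_jump_mutual_absolute_continuity_general α β hα hβ π hsupp hint hπne x hx inv hinv F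
    hF
end
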